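/- arXiv:2312.06353 — 2 statements merged into one kernel-verified Lean document; each statement's English description precedes it below -/
import Mathlib

section
/- Let E be a real inner product space and f : E → ℝ be differentiable, with gradient ∇f Lipschitz continuous with constant L ≥ 0 (i.e., ‖∇f(u) − ∇f(v)‖ ≤ L‖u − v‖ for all u, v). Then for every w, z ∈ E and every ε ≠ 0, the two-point scalar gradient estimate satisfies |(f(w + ε • z) − f(w − ε • z))/(2ε) − ⟪∇f(w), z⟫| ≤ (L · |ε| · ‖z‖²)/2. -/
open scoped RealInnerProductSpace

/-! The descent inequality `|f y - f x - ⟪∇f x, y - x⟫| ≤ L ‖y - x‖² / 2` follows by comparing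
`t ↦ f (x + t • (y - x)) - t ⟪∇f x, y - x⟫` on `[0, 1]` with the barrier `L ‖y - x‖² t² / 2`,
whose derivative dominates the former's by the Lipschitz bound on `∇f`. Applying it at
`y = w ± ε • z`, subtracting and dividing by `2ε` gives the estimate. -/
section

variable {E : Type*} [NormedAddCommGroup E] [InnerProductSpace ℝ E] [CompleteSpace E]

theorem DifferentiableAt.hasDerivAt_comp_add_smul {f : E → ℝ} {x v : E} {t : ℝ}
    (hf : DifferentiableAt ℝ f (x + t • v)) :
    HasDerivAt (fun s : ℝ => f (x + s • v)) ⟪gradient f (x + t • v), v⟫ t := by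
  rw [inner_gradient_left]
  exact hf.hasFDerivAt.comp_hasDerivAt t
    ((((hasDerivAt_id t).smul_const v).const_add x).congr_deriv (one_smul ℝ v))

theorem abs_sub_sub_inner_gradient_le {f : E → ℝ} {L : ℝ} {x : E} (hf : Differentiable ℝ f)
    (hlip : ∀ y, ‖gradient f y - gradient f x‖ ≤ L * ‖y - x‖) (y : E) :
    |f y - f x - ⟪gradient f x, y - x⟫| ≤ L * ‖y - x‖ ^ 2 / 2 := by
  set v := y - x
  let F : ℝ → ℝ := fun t => f (x + t • v) - f x - t * ⟪gradient f x, v⟫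
  have hF : ∀ t, HasDerivAt F ⟪gradient f (x + t • v) - gradient f x, v⟫ t := fun t => by
    simpa only [inner_sub_left, one_mul] using
      (((hf (x + t • v)).hasDerivAt_comp_add_smul).sub_const (f x)).fun_sub
        (hasDerivAt_mul_const _)
  have hB : ∀ t, HasDerivAt (fun t => L * ‖v‖ ^ 2 * t ^ 2 / 2) (L * ‖v‖ ^ 2 * t) t := fun t =>
    (((hasDerivAt_pow 2 t).const_mul _).div_const 2).congr_deriv (by norm_num; ring)
  have hbound : ∀ t ∈ Set.Ico (0 : ℝ) 1,
      ‖⟪gradient f (x + t • v) - gradient f x, v⟫‖ ≤ L * ‖v‖ ^ 2 * t := fun t ht =>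
    calc ‖⟪gradient f (x + t • v) - gradient f x, v⟫‖
        ≤ ‖gradient f (x + t • v) - gradient f x‖ * ‖v‖ := norm_inner_le_norm _ _
      _ ≤ L * ‖t • v‖ * ‖v‖ := by
          gcongr; simpa only [add_sub_cancel_left] using hlip (x + t • v)
      _ = L * ‖v‖ ^ 2 * t := by rw [norm_smul, Real.norm_of_nonneg ht.1]; ring
  have hfence := image_norm_le_of_norm_deriv_right_le_deriv_boundary
    (fun t _ => (hF t).continuousAt.continuousWithinAt) (fun t _ => (hF t).hasDerivWithinAt)
    (by simp [F]) hB hbound (Set.right_mem_Icc.2 zero_le_one)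
  simpa [F, v] using hfence

end

theorem two_point_estimate_error_bound_general
    {E : Type*} [NormedAddCommGroup E] [InnerProductSpace ℝ E] [CompleteSpace E]
    (f : E → ℝ) (L : ℝ)
    (hf : Differentiable ℝ f)
    (hlip : ∀ u v : E, ‖gradient f u - gradient f v‖ ≤ L * ‖u - v‖)
    (w z : E) (ε : ℝ) (hε : ε ≠ 0) :
    |(f (w + ε • z) - f (w - ε • z)) / (2 * ε) - ⟪gradient f w, z⟫|
      ≤ L * |ε| * ‖z‖ ^ 2 / 2 := by
  have hplus := abs_sub_sub_inner_gradient_le hf (fun y => hlip y w) (w + ε • z)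
  have hminus := abs_sub_sub_inner_gradient_le hf (fun y => hlip y w) (w - ε • z)
  simp only [add_sub_cancel_left, sub_sub_cancel_left, norm_neg, norm_smul, Real.norm_eq_abs,
    inner_neg_right, real_inner_smul_right, mul_pow, sq_abs] at hplus hminus
  set A := f (w + ε • z) - f w - ε * ⟪gradient f w, z⟫
  set B := f (w - ε • z) - f w - -(ε * ⟪gradient f w, z⟫)
  have hsplit : (f (w + ε • z) - f (w - ε • z)) / (2 * ε) - ⟪gradient f w, z⟫
      = (A - B) / (2 * ε) := by
    field_simp; ring
  rw [hsplit, abs_div, abs_mul, abs_two, div_le_iff₀ (by positivity)]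
  calc |A - B| ≤ |A| + |B| := abs_sub _ _
    _ ≤ L * (ε ^ 2 * ‖z‖ ^ 2) / 2 + L * (ε ^ 2 * ‖z‖ ^ 2) / 2 := add_le_add hplus hminus
    _ = L * |ε| * ‖z‖ ^ 2 / 2 * (2 * |ε|) := by rw [← sq_abs ε]; ring

/-- Under `L`-Lipschitz continuity of the gradient, the two-point scalar
gradient estimate approximates the directional derivative `⟪∇f(w), z⟫` with
error at most `L * |ε| * ‖z‖² / 2`. -/
theorem two_point_estimate_error_bound
    {E : Type*} [NormedAddCommGroup E] [InnerProductSpace ℝ E] [CompleteSpace E]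
    (f : E → ℝ) (L : ℝ) (hL : 0 ≤ L)
    (hf : Differentiable ℝ f)
    (hlip : ∀ u v : E, ‖gradient f u - gradient f v‖ ≤ L * ‖u - v‖)
    (w z : E) (ε : ℝ) (hε : ε ≠ 0) :
    |(f (w + ε • z) - f (w - ε • z)) / (2 * ε) - ⟪gradient f w, z⟫|
      ≤ L * |ε| * ‖z‖ ^ 2 / 2 :=
  two_point_estimate_error_bound_general f L hf hlip w z ε hε
end

section
/- Let E be a real inner product space and f : E → ℝ be differentiable, with gradient ∇f Lipschitz continuous with constant L ≥ 0. Then for every w, z ∈ E and every ε ≠ 0, the estimated gradient vector ĝ • z, where ĝ = (f(w + ε • z) − f(w − ε • z))/(2ε), satisfies ‖ĝ • z − ⟪∇f(w), z⟫ • z‖ ≤ (L · |ε| · ‖z‖³)/2. -/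
open scoped RealInnerProductSpace

section DescentLemma

variable {E F : Type*} [NormedAddCommGroup E] [NormedSpace ℝ E]
  [NormedAddCommGroup F] [NormedSpace ℝ F]
  {f : E → F} {f' : E → E →L[ℝ] F} {L : ℝ}

/- On `[0, 1]` the derivative of `t ↦ f (x + t • h) - f x - t • f' x h` has norm at most
`L * ‖h‖ ^ 2 * t`, the derivative of the boundary function `t ↦ L / 2 * ‖h‖ ^ 2 * t ^ 2`. -/
theorem norm_sub_sub_fderiv_le_of_lipschitz_fderiv
    (hf : ∀ y, HasFDerivAt f (f' y) y) (hlip : ∀ u v, ‖f' u - f' v‖ ≤ L * ‖u - v‖)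
    (x h : E) :
    ‖f (x + h) - f x - f' x h‖ ≤ L / 2 * ‖h‖ ^ 2 := by
  set g : ℝ → F := fun t => f (x + t • h) - f x - t • f' x h
  have hg (t : ℝ) : HasDerivAt g ((f' (x + t • h) - f' x) h) t := by
    have hline : HasDerivAt (fun s : ℝ => x + s • h) h t := by
      simpa using ((hasDerivAt_id t).smul_const h).const_add x
    have := ((hf _).comp_hasDerivAt t hline).sub_const (f x) |>.sub
      ((hasDerivAt_id t).smul_const (f' x h))
    exact this.congr_deriv (by rw [one_smul]; rfl)
  have hB (t : ℝ) : HasDerivAt (fun t => L / 2 * ‖h‖ ^ 2 * t ^ 2) (L * ‖h‖ ^ 2 * t) t :=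
    ((hasDerivAt_pow 2 t).const_mul _).congr_deriv (by push_cast; ring)
  have hbound : ∀ t ∈ Set.Ico (0 : ℝ) 1, ‖(f' (x + t • h) - f' x) h‖ ≤ L * ‖h‖ ^ 2 * t := by
    intro t ht
    calc ‖(f' (x + t • h) - f' x) h‖ ≤ ‖f' (x + t • h) - f' x‖ * ‖h‖ :=
          ContinuousLinearMap.le_opNorm _ _
      _ ≤ L * ‖x + t • h - x‖ * ‖h‖ := by gcongr; exact hlip _ _
      _ = L * ‖h‖ ^ 2 * t := by
          rw [add_sub_cancel_left, norm_smul, Real.norm_of_nonneg ht.1]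
          ring
  have := image_norm_le_of_norm_deriv_right_le_deriv_boundary
    (fun t _ => (hg t).continuousAt.continuousWithinAt) (fun t _ => (hg t).hasDerivWithinAt)
    (by simp [g]) hB hbound (Set.right_mem_Icc.2 zero_le_one)
  simpa [g] using this

theorem norm_sub_sub_two_smul_fderiv_le_of_lipschitz_fderiv
    (hf : ∀ y, HasFDerivAt f (f' y) y) (hlip : ∀ u v, ‖f' u - f' v‖ ≤ L * ‖u - v‖)
    (x h : E) :
    ‖f (x + h) - f (x - h) - (2 : ℝ) • f' x h‖ ≤ L * ‖h‖ ^ 2 := by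
  have hfwd := norm_sub_sub_fderiv_le_of_lipschitz_fderiv hf hlip x h
  have hbwd := norm_sub_sub_fderiv_le_of_lipschitz_fderiv hf hlip x (-h)
  rw [← sub_eq_add_neg, map_neg, norm_neg] at hbwd
  calc ‖f (x + h) - f (x - h) - (2 : ℝ) • f' x h‖
      = ‖(f (x + h) - f x - f' x h) - (f (x - h) - f x - -f' x h)‖ := by
        congr 1; module
    _ ≤ L / 2 * ‖h‖ ^ 2 + L / 2 * ‖h‖ ^ 2 := (norm_sub_le _ _).trans (add_le_add hfwd hbwd)
    _ = L * ‖h‖ ^ 2 := by ring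

end DescentLemma

theorem estimated_gradient_vector_error_bound_general
    {E : Type*} [NormedAddCommGroup E] [InnerProductSpace ℝ E] [CompleteSpace E]
    (f : E → ℝ) (L : ℝ)
    (hf : Differentiable ℝ f)
    (hlip : ∀ u v : E, ‖gradient f u - gradient f v‖ ≤ L * ‖u - v‖)
    (w z : E) (ε : ℝ) (hε : ε ≠ 0) :
    ‖((f (w + ε • z) - f (w - ε • z)) / (2 * ε)) • z - ⟪gradient f w, z⟫ • z‖
      ≤ L * |ε| * ‖z‖ ^ 3 / 2 := by
  have hderiv (y : E) : HasFDerivAt f (InnerProductSpace.toDual ℝ E (gradient f y)) y :=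
    (hf y).hasGradientAt.hasFDerivAt
  have hlip' (u v : E) : ‖InnerProductSpace.toDual ℝ E (gradient f u) -
      InnerProductSpace.toDual ℝ E (gradient f v)‖ ≤ L * ‖u - v‖ := by
    simpa only [← map_sub, LinearIsometryEquiv.norm_map] using hlip u v
  have hsym := norm_sub_sub_two_smul_fderiv_le_of_lipschitz_fderiv hderiv hlip' w (ε • z)
  simp only [InnerProductSpace.toDual_apply_apply, inner_smul_right, norm_smul,
    Real.norm_eq_abs, smul_eq_mul] at hsym
  have hquot : |(f (w + ε • z) - f (w - ε • z)) / (2 * ε) - ⟪gradient f w, z⟫|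
      ≤ L * |ε| * ‖z‖ ^ 2 / 2 := by
    rw [div_sub' (by positivity), abs_div, abs_mul, abs_two,
      div_le_iff₀ (by positivity)]
    calc _ ≤ L * (|ε| * ‖z‖) ^ 2 := by rwa [mul_assoc 2 ε]
      _ = _ := by ring
  calc ‖((f (w + ε • z) - f (w - ε • z)) / (2 * ε)) • z - ⟪gradient f w, z⟫ • z‖
      = |(f (w + ε • z) - f (w - ε • z)) / (2 * ε) - ⟪gradient f w, z⟫| * ‖z‖ := by
        rw [← sub_smul, norm_smul, Real.norm_eq_abs]
    _ ≤ L * |ε| * ‖z‖ ^ 2 / 2 * ‖z‖ := by gcongr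
    _ = L * |ε| * ‖z‖ ^ 3 / 2 := by ring

/-- Under `L`-Lipschitz continuity of the gradient, the estimated gradient
vector `ĝ • z` approximates `⟪∇f(w), z⟫ • z` with error at most
`L * |ε| * ‖z‖³ / 2`. -/
theorem estimated_gradient_vector_error_bound
    {E : Type*} [NormedAddCommGroup E] [InnerProductSpace ℝ E] [CompleteSpace E]
    (f : E → ℝ) (L : ℝ) (hL : 0 ≤ L)
    (hf : Differentiable ℝ f)
    (hlip : ∀ u v : E, ‖gradient f u - gradient f v‖ ≤ L * ‖u - v‖)
    (w z : E) (ε : ℝ) (hε : ε ≠ 0) :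
    ‖((f (w + ε • z) - f (w - ε • z)) / (2 * ε)) • z - ⟪gradient f w, z⟫ • z‖
      ≤ L * |ε| * ‖z‖ ^ 3 / 2 :=
  estimated_gradient_vector_error_bound_general f L hf hlip w z ε hε
end
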